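/- For a multi-tilde-bar expression E'₁,ₙ, the nullability satisfies: Null(E'₁,ₙ) = ∅ if (1,n) ∈ B, Null(E'₁,ₙ) = {ε} if (1,n) ∈ T, and otherwise Null(E'₁,ₙ) = ⋃_{j=1}^{n-1} Null(E'₁,ⱼ)·Null(E'ⱼ₊₁,ₙ). -/

import Mathlib

attribute [local instance] Classical.propDecidable

namespace Mtb

variable {A : Type*}

/-- `First L`: letters that can begin a word of `L`. -/
def First (L : Set (List A)) : Set A := {x | ∃ v, x :: v ∈ L}

/-- `Last L`: letters that can end a word of `L`. -/
def Last (L : Set (List A)) : Set A := {x | ∃ u, u ++ [x] ∈ L}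

/-- `Follow x L`: letters that can immediately follow `x` in a word of `L`. -/
def Follow (x : A) (L : Set (List A)) : Set A := {y | ∃ u v, u ++ x :: y :: v ∈ L}

/-- Letters occurring in some word of `L`. -/
def lettersOf (L : Set (List A)) : Set A := {a | ∃ w ∈ L, a ∈ w}

/-- Concatenation of languages. -/
def cat (L M : Set (List A)) : Set (List A) := {w | ∃ u ∈ L, ∃ v ∈ M, w = u ++ v}

/-- `nullL L = {ε}` if `ε ∈ L`, `∅` otherwise. -/
def nullL (L : Set (List A)) : Set (List A) := {w | w = [] ∧ [] ∈ L}

/-- Apply the tilde (add ε) or bar (remove ε) operator attached to the pair `p`, if any. -/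
def adjust (B T : Set (ℕ × ℕ)) (p : ℕ × ℕ) (L : Set (List A)) : Set (List A) :=
  if p ∈ T then L ∪ {[]} else if p ∈ B then L \ {[]} else L

/-- The language of the multi-tilde-bar expression `E'_{i,j}` built from factor languages
`E`, bar set `B` and tilde set `T`. -/
noncomputable def mtb (E : ℕ → Set (List A)) (B T : Set (ℕ × ℕ)) (i j : ℕ) : Set (List A) :=
  if i = j then adjust B T (i, i) (E i)
  else adjust B T (i, j) (⋃ k ∈ Set.Ico i j, cat (mtb E B T i k) (mtb E B T (k + 1) j))
termination_by j - i
decreasing_by all_goals (simp_all [Set.mem_Ico]; omega)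

/-- The bars-and-tildes sets are well-formed for `n` factors: disjoint, and within range. -/
def WellFormed (B T : Set (ℕ × ℕ)) (n : ℕ) : Prop :=
  Disjoint B T ∧ ∀ p ∈ B ∪ T, 1 ≤ p.1 ∧ p.1 ≤ p.2 ∧ p.2 ≤ n

/-- The `⊙ε` operator at level `p`: concatenation, with `ε` removed when `p` is a bar pair. -/
def odot (B : Set (ℕ × ℕ)) (p : ℕ × ℕ) (L M : Set (List A)) : Set (List A) :=
  if p ∈ B then cat L M \ {[]} else cat L M

end Mtb

/-! Nullability commutes with unions and with concatenation (`ε = u ++ v` forces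
`u = v = ε`), so it passes through the defining recursion of `mtb`; a tilde or bar at `(1, n)`
then overrides the result. -/

namespace Mtb

variable {A : Type*} {L M : Set (List A)}

theorem nullL_union_nil : nullL (L ∪ {[]}) = {[]} := by
  ext w
  simp [nullL]

theorem nullL_diff_nil : nullL (L \ {[]}) = ∅ := by
  ext w
  simp [nullL]

theorem nullL_biUnion {ι : Type*} (s : Set ι) (L : ι → Set (List A)) :
    nullL (⋃ i ∈ s, L i) = ⋃ i ∈ s, nullL (L i) := by
  ext w
  simp only [nullL, Set.mem_iUnion, Set.mem_ofPred_eq, exists_and_left, exists_prop]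

theorem nullL_cat : nullL (cat L M) = cat (nullL L) (nullL M) := by
  ext w
  constructor
  · rintro ⟨rfl, u, hu, v, hv, huv⟩
    obtain ⟨rfl, rfl⟩ := List.append_eq_nil_iff.mp huv.symm
    exact ⟨[], ⟨rfl, hu⟩, [], ⟨rfl, hv⟩, rfl⟩
  · rintro ⟨_, ⟨rfl, hu⟩, _, ⟨rfl, hv⟩, rfl⟩
    exact ⟨rfl, [], hu, [], hv, rfl⟩

theorem adjust_of_mem_tilde {B T : Set (ℕ × ℕ)} {p : ℕ × ℕ} (hT : p ∈ T) :
    adjust B T p L = L ∪ {[]} := if_pos hT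

theorem adjust_of_mem_bar {B T : Set (ℕ × ℕ)} {p : ℕ × ℕ} (hB : p ∈ B) (hT : p ∉ T) :
    adjust B T p L = L \ {[]} := by
  rw [adjust, if_neg hT, if_pos hB]

theorem adjust_of_notMem {B T : Set (ℕ × ℕ)} {p : ℕ × ℕ} (h : p ∉ B ∪ T) :
    adjust B T p L = L := by
  rw [Set.mem_union, not_or] at h
  rw [adjust, if_neg h.2, if_neg h.1]

theorem mtb_of_ne (E : ℕ → Set (List A)) (B T : Set (ℕ × ℕ)) {i j : ℕ} (h : i ≠ j) :
    mtb E B T i j =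
      adjust B T (i, j) (⋃ k ∈ Set.Ico i j, cat (mtb E B T i k) (mtb E B T (k + 1) j)) := by
  rw [mtb, if_neg h]

end Mtb

open Mtb in
/-- Recursive computation of nullability of a multi-tilde-bar expression:
`Null(E'_{1,n}) = ∅` if `(1,n) ∈ B`, `{ε}` if `(1,n) ∈ T`, and otherwise
`⋃_{j=1}^{n-1} Null(E'_{1,j})·Null(E'_{j+1,n})`. -/
theorem mtb_null_recursive {A : Type*} (n : ℕ) (hn : 2 ≤ n) (E : ℕ → Set (List A))
    (B T : Set (ℕ × ℕ)) (hwf : WellFormed B T n) :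
    ((1, n) ∈ B → nullL (mtb E B T 1 n) = (∅ : Set (List A))) ∧
      ((1, n) ∈ T → nullL (mtb E B T 1 n) = {([] : List A)}) ∧
      ((1, n) ∉ B ∪ T →
        nullL (mtb E B T 1 n) =
          ⋃ j ∈ Set.Icc 1 (n - 1), cat (nullL (mtb E B T 1 j)) (nullL (mtb E B T (j + 1) n))) := by
  rw [mtb_of_ne E B T (by omega : 1 ≠ n)]
  refine ⟨fun hB => ?_, fun hT => ?_, fun h => ?_⟩
  · rw [adjust_of_mem_bar hB (Set.disjoint_left.mp hwf.1 hB), nullL_diff_nil]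
  · rw [adjust_of_mem_tilde hT, nullL_union_nil]
  · rw [adjust_of_notMem h, nullL_biUnion,
      Set.Icc_sub_one_right_eq_Ico_of_not_isMin (not_isMin_iff.2 ⟨0, by omega⟩)]
    simp only [nullL_cat]
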